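/- Let p ≥ 2 and let P(x) = x⁴ − a·x³ + b·x² − p·a·x + p² ∈ ℤ[x]. Define Q(x) = x² − a·x + (b − 2p) with discriminant Δ_Q = a² − 4(b − 2p), and let Δ be the discriminant of P. Let ℓ be an odd prime not dividing 2p, such that both Δ and Δ_Q are quadratic non-residues modulo ℓ. Then P is irreducible modulo ℓ. -/

import Mathlib

/-!
If `P` had a root `z` modulo `ℓ`, then `z ≠ 0` because `ℓ ∤ p`, and `y = z + p / z` would be a root
of `Q`, so `Δ_Q = (2y - a)²` would be a square. Hence a nontrivial factorisation of `P` modulo `ℓ`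
is a product of two monic quadratics `f g`, and then `Δ = disc f · disc g · Res(f, g)²`. Neither
`disc f` nor `disc g` is a square, since that factor would otherwise have a root; but in a finite
field the product of two non-squares is a square, so `Δ` would be a square.
-/

open Polynomial Finset

section CommRing

variable {R S : Type*} [CommRing R] [CommRing S]

noncomputable def quartic (e₁ e₂ e₃ e₄ : R) : R[X] :=
  X ^ 4 - C e₁ * X ^ 3 + C e₂ * X ^ 2 - C e₃ * X + C e₄

def quarticDisc (e₁ e₂ e₃ e₄ : R) : R :=
  256*e₄^3 - 192*e₁*e₃*e₄^2 - 128*e₂^2*e₄^2 + 144*e₂*e₃^2*e₄ - 27*e₃^4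
  + 144*e₁^2*e₂*e₄^2 - 6*e₁^2*e₃^2*e₄ - 80*e₁*e₂^2*e₃*e₄ + 18*e₁*e₂*e₃^3
  + 16*e₂^4*e₄ - 4*e₂^3*e₃^2 - 27*e₁^4*e₄^2 + 18*e₁^3*e₂*e₃*e₄ - 4*e₁^3*e₃^3
  - 4*e₁^2*e₂^3*e₄ + e₁^2*e₂^2*e₃^2

theorem monic_quartic [Nontrivial R] (e₁ e₂ e₃ e₄ : R) : (quartic e₁ e₂ e₃ e₄).Monic := by
  unfold quartic; monicity!

theorem natDegree_quartic [Nontrivial R] (e₁ e₂ e₃ e₄ : R) :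
    (quartic e₁ e₂ e₃ e₄).natDegree = 4 := by
  unfold quartic; compute_degree!

theorem map_quartic (f : R →+* S) (e₁ e₂ e₃ e₄ : R) :
    (quartic e₁ e₂ e₃ e₄).map f = quartic (f e₁) (f e₂) (f e₃) (f e₄) := by
  simp [quartic]

theorem map_quarticDisc (f : R →+* S) (e₁ e₂ e₃ e₄ : R) :
    f (quarticDisc e₁ e₂ e₃ e₄) = quarticDisc (f e₁) (f e₂) (f e₃) (f e₄) := by
  simp only [quarticDisc, map_add, map_sub, map_mul, map_pow, map_ofNat]

theorem quartic_inj {e₁ e₂ e₃ e₄ e₁' e₂' e₃' e₄' : R} :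
    quartic e₁ e₂ e₃ e₄ = quartic e₁' e₂' e₃' e₄' ↔
      e₁ = e₁' ∧ e₂ = e₂' ∧ e₃ = e₃' ∧ e₄ = e₄' := by
  refine ⟨fun h => ?_, by rintro ⟨rfl, rfl, rfl, rfl⟩; rfl⟩
  have hcoeff (n : ℕ) := congrArg (coeff · n) h
  refine ⟨?_, ?_, ?_, ?_⟩
  · simpa [quartic, coeff_X, coeff_C] using hcoeff 3
  · simpa [quartic, coeff_X, coeff_C] using hcoeff 2
  · simpa [quartic, coeff_X, coeff_C] using hcoeff 1
  · simpa [quartic, coeff_X, coeff_C] using hcoeff 0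

theorem prod_X_sub_C_eq_quartic (r : Fin 4 → R) :
    ∏ i, (X - C (r i)) = quartic (r 0 + r 1 + r 2 + r 3)
      (r 0 * r 1 + r 0 * r 2 + r 0 * r 3 + r 1 * r 2 + r 1 * r 3 + r 2 * r 3)
      (r 0 * r 1 * r 2 + r 0 * r 1 * r 3 + r 0 * r 2 * r 3 + r 1 * r 2 * r 3)
      (r 0 * r 1 * r 2 * r 3) := by
  simp only [Fin.prod_univ_four, quartic, map_add, map_mul]
  ring

theorem quadratic_mul_quadratic_eq_quartic (s t u v : R) :
    (X ^ 2 + C s * X + C t) * (X ^ 2 + C u * X + C v) =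
      quartic (-(s + u)) (t + v + s * u) (-(s * v + u * t)) (t * v) := by
  simp only [quartic, map_add, map_mul, map_neg]
  ring

theorem prod_sq_sub_eq_quarticDisc (r : Fin 4 → R) {e₁ e₂ e₃ e₄ : R}
    (h : ∏ i, (X - C (r i)) = quartic e₁ e₂ e₃ e₄) :
    ∏ i, ∏ j ∈ univ.filter (fun j => i < j), (r i - r j) ^ 2 = quarticDisc e₁ e₂ e₃ e₄ := by
  obtain ⟨rfl, rfl, rfl, rfl⟩ := quartic_inj.mp ((prod_X_sub_C_eq_quartic r).symm.trans h)
  simp only [prod_filter, Fin.prod_univ_four, Fin.reduceLT, lt_self_iff_false, ↓reduceIte, mul_one,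
    one_mul, quarticDisc]
  ring

/-- The last factor is the resultant of the two quadratics. -/
theorem quarticDisc_quadratic_mul_quadratic (s t u v : R) :
    quarticDisc (-(s + u)) (t + v + s * u) (-(s * v + u * t)) (t * v) =
      (s ^ 2 - 4 * t) * (u ^ 2 - 4 * v) *
        ((u - s) ^ 2 * t - s * (u - s) * (v - t) + (v - t) ^ 2) ^ 2 := by
  unfold quarticDisc; ring

theorem Polynomial.Monic.eq_X_sq_add_C_mul_X_add_C {f : R[X]} (hf : f.Monic)
    (hdeg : f.natDegree = 2) :
    f = X ^ 2 + C (f.coeff 1) * X + C (f.coeff 0) := by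
  ext (_ | _ | _ | n)
  · simp
  · simp
  · simp [← hdeg ▸ hf.coeff_natDegree]
  · rw [coeff_eq_zero_of_natDegree_lt (by omega)]
    simp [coeff_X_pow]

end CommRing

section Field

variable {F : Type*} [Field F]

theorem isSquare_of_isRoot_quartic_palindromic {p a b z : F} (hp : p ≠ 0)
    (hz : (quartic a b (p * a) (p ^ 2)).IsRoot z) : IsSquare (a ^ 2 - 4 * (b - 2 * p)) := by
  have hz0 : z ≠ 0 := by
    rintro rfl
    simp [quartic, hp] at hz
  have hy : (z + p / z) ^ 2 - a * (z + p / z) + (b - 2 * p) = 0 := by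
    simp only [quartic, IsRoot, eval_add, eval_sub, eval_mul, eval_pow, eval_C, eval_X] at hz
    field_simp
    linear_combination hz
  exact ⟨2 * (z + p / z) - a, by linear_combination -4 * hy⟩

theorem exists_isRoot_of_isSquare_discrim [NeZero (2 : F)] {s t : F}
    (h : IsSquare (s ^ 2 - 4 * t)) : ∃ x, (X ^ 2 + C s * X + C t).IsRoot x := by
  obtain ⟨w, hw⟩ := h
  obtain ⟨x, hx⟩ := exists_quadratic_eq_zero (b := s) (c := t) one_ne_zero
    ⟨w, by rw [discrim]; linear_combination hw⟩
  exact ⟨x, by simpa [sq] using hx⟩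

theorem not_isSquare_discrim_of_dvd [NeZero (2 : F)] {q : F[X]} {s t : F}
    (hq : ∀ z, ¬ q.IsRoot z) (hdvd : X ^ 2 + C s * X + C t ∣ q) : ¬ IsSquare (s ^ 2 - 4 * t) :=
  fun h => let ⟨x, hx⟩ := exists_isRoot_of_isSquare_discrim h; hq x (hx.dvd hdvd)

theorem isSquare_mul_of_not_isSquare [Fintype F] {x y : F} (hx : ¬ IsSquare x)
    (hy : ¬ IsSquare y) : IsSquare (x * y) := by
  classical
  have hxy : x * y ≠ 0 := mul_ne_zero (by rintro rfl; exact hx .zero)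
    (by rintro rfl; exact hy .zero)
  rw [← quadraticChar_one_iff_isSquare hxy, map_mul,
    quadraticChar_neg_one_iff_not_isSquare.mpr hx, quadraticChar_neg_one_iff_not_isSquare.mpr hy]
  norm_num

theorem irreducible_quartic_of_not_isSquare_quarticDisc [Fintype F] [NeZero (2 : F)]
    {e₁ e₂ e₃ e₄ : F} (hroot : ∀ z, ¬ (quartic e₁ e₂ e₃ e₄).IsRoot z)
    (hdisc : ¬ IsSquare (quarticDisc e₁ e₂ e₃ e₄)) : Irreducible (quartic e₁ e₂ e₃ e₄) := by
  rw [(monic_quartic _ _ _ _).irreducible_iff_natDegree', natDegree_quartic]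
  refine ⟨fun h => by simpa [h] using natDegree_quartic e₁ e₂ e₃ e₄, fun f g hf hg hfg hdeg => ?_⟩
  have hf_dvd : f ∣ quartic e₁ e₂ e₃ e₄ := hfg ▸ dvd_mul_right f g
  have hg_dvd : g ∣ quartic e₁ e₂ e₃ e₄ := hfg ▸ dvd_mul_left g f
  obtain hg1 | hg2 : g.natDegree = 1 ∨ g.natDegree = 2 := by simp only [mem_Ioc] at hdeg; omega
  · rw [hg.eq_X_add_C hg1] at hg_dvd
    exact hroot (-g.coeff 0) (IsRoot.dvd (by simp) hg_dvd)
  have hf2 : f.natDegree = 2 := by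
    have := congrArg natDegree hfg
    rw [hf.natDegree_mul hg, natDegree_quartic] at this
    omega
  obtain ⟨s, t, rfl⟩ : ∃ s t, f = X ^ 2 + C s * X + C t := ⟨_, _, hf.eq_X_sq_add_C_mul_X_add_C hf2⟩
  obtain ⟨u, v, rfl⟩ : ∃ u v, g = X ^ 2 + C u * X + C v := ⟨_, _, hg.eq_X_sq_add_C_mul_X_add_C hg2⟩
  rw [quadratic_mul_quadratic_eq_quartic, quartic_inj] at hfg
  obtain ⟨rfl, rfl, rfl, rfl⟩ := hfg
  rw [quarticDisc_quadratic_mul_quadratic] at hdisc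
  exact hdisc <| (isSquare_mul_of_not_isSquare (not_isSquare_discrim_of_dvd hroot hf_dvd)
    (not_isSquare_discrim_of_dvd hroot hg_dvd)).mul (IsSquare.sq _)

end Field

theorem quartic_irreducible_mod_l_general (p : ℕ) (a b : ℤ) (ℓ : ℕ)
    (hl : ℓ.Prime) (hndvd : ¬ (ℓ : ℤ) ∣ 2 * p) (Δ : ℤ)
    (r : Fin 4 → ℂ)
    (hroots : (X ^ 4 - C a * X ^ 3 + C b * X ^ 2 - C ((p : ℤ) * a) * X +
        C ((p : ℤ) ^ 2)).map (Int.castRingHom ℂ) = ∏ i : Fin 4, (X - C (r i)))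
    (hΔ : (Δ : ℂ) = ∏ i : Fin 4, ∏ j ∈ univ.filter (fun j => i < j), (r i - r j) ^ 2)
    (hΔns : ¬ IsSquare ((Δ : ZMod ℓ)))
    (hΔQns : ¬ IsSquare (((a ^ 2 - 4 * (b - 2 * p) : ℤ) : ZMod ℓ))) :
    Irreducible ((X ^ 4 - C a * X ^ 3 + C b * X ^ 2 - C ((p : ℤ) * a) * X +
      C ((p : ℤ) ^ 2)).map (Int.castRingHom (ZMod ℓ))) := by
  have := Fact.mk hl
  have h2p : (2 : ZMod ℓ) * p ≠ 0 := by
    exact_mod_cast mt (ZMod.intCast_zmod_eq_zero_iff_dvd _ ℓ).mp hndvd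
  have : NeZero (2 : ZMod ℓ) := ⟨left_ne_zero_of_mul h2p⟩
  change (quartic (a : ℤ) b (p * a) (p ^ 2)).map _ = _ at hroots
  change Irreducible ((quartic (a : ℤ) b (p * a) (p ^ 2)).map _)
  have hΔ_eq : Δ = quarticDisc a b (p * a) (p ^ 2) := by
    apply Int.cast_injective (α := ℂ)
    rw [hΔ, prod_sq_sub_eq_quarticDisc r (hroots.symm.trans (map_quartic _ _ _ _ _))]
    exact (map_quarticDisc _ _ _ _ _).symm
  rw [map_quartic]
  refine irreducible_quartic_of_not_isSquare_quarticDisc (fun z hz => hΔQns ?_) ?_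
  · simpa using isSquare_of_isRoot_quartic_palindromic (right_ne_zero_of_mul h2p)
      (by simpa using hz)
  · rw [← map_quarticDisc, ← hΔ_eq]
    exact hΔns

/-- Irreducibility criterion mod `ℓ`: if both the discriminant `Δ` of the
palindromic quartic `P` and the discriminant `Δ_Q = a² − 4(b − 2p)` of the
auxiliary quadratic are quadratic non-residues modulo an odd prime `ℓ ∤ 2p`,
then `P` is irreducible modulo `ℓ`. Here `Δ` is characterized as the product of
squared differences of the complex roots of `P`. -/
theorem quartic_irreducible_mod_l (p : ℕ) (hp : 2 ≤ p) (a b : ℤ) (ℓ : ℕ)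
    (hl : ℓ.Prime) (hodd : Odd ℓ) (hndvd : ¬ (ℓ : ℤ) ∣ 2 * p) (Δ : ℤ)
    (r : Fin 4 → ℂ)
    (hroots : (X ^ 4 - C a * X ^ 3 + C b * X ^ 2 - C ((p : ℤ) * a) * X +
        C ((p : ℤ) ^ 2)).map (Int.castRingHom ℂ) = ∏ i : Fin 4, (X - C (r i)))
    (hΔ : (Δ : ℂ) = ∏ i : Fin 4, ∏ j ∈ univ.filter (fun j => i < j), (r i - r j) ^ 2)
    (hΔns : ¬ IsSquare ((Δ : ZMod ℓ)))
    (hΔQns : ¬ IsSquare (((a ^ 2 - 4 * (b - 2 * p) : ℤ) : ZMod ℓ))) :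
    Irreducible ((X ^ 4 - C a * X ^ 3 + C b * X ^ 2 - C ((p : ℤ) * a) * X +
      C ((p : ℤ) ^ 2)).map (Int.castRingHom (ZMod ℓ))) :=
  quartic_irreducible_mod_l_general p a b ℓ hl hndvd Δ r hroots hΔ hΔns hΔQns
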